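/- arXiv:2202.03928 — 4 statements merged into one kernel-verified Lean document; each statement's English description precedes it below -/
import Mathlib

section
/- Let T > 0, ρ ∈ ℝ and let d ≥ 1 be an integer. Then there exists a constant C > 0 (depending only on T, ρ and d) such that for every integer k ≥ 1 and every t ∈ (0, T], f_k(t) ≤ C^k · √(k!) / t^{(k−1)/2}. -/
/-!
Write `f_{n+1}(t) = E · B^{n/2}`. The prefactor `E` is at most `e^{|ρ|T(n+1)}`, and for `ρ ≠ 0`
`B = (dn/2t) · x/(eˣ - 1)` with `x = 2ρt/n`; the factor `x/(eˣ - 1)` lies in `[0, e^{|x|}]` and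
`|x| ≤ 2|ρ|T`. So `Bt ≤ a n` for a constant `a`, and `(a n)^{n/2} ≤ √((ae)^n n!)` by `nⁿ ≤ eⁿ n!`.
-/

open Real Nat

lemma natCast_pow_self_le_exp_mul_factorial (n : ℕ) : (n : ℝ) ^ n ≤ exp n * n ! :=
  (div_le_iff₀ (by positivity)).1 (pow_div_factorial_le_exp _ n.cast_nonneg n)

lemma rpow_half_le_of_mul_le {B c t : ℝ} {n : ℕ} (hB : 0 ≤ B) (ht : 0 < t) (hc : 0 ≤ c)
    (hBt : B * t ≤ c * n) :
    B ^ ((n : ℝ) / 2) ≤ √((c * exp 1) ^ n * n !) / t ^ ((n : ℝ) / 2) := by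
  rw [le_div_iff₀ (by positivity), ← mul_rpow hB ht.le, rpow_div_two_eq_sqrt _ (by positivity),
    rpow_natCast]
  calc √(B * t) ^ n ≤ √(c * n) ^ n := by gcongr
    _ ≤ √((c * exp 1) ^ n * n !) := by
      rw [le_sqrt (by positivity) (by positivity), ← pow_mul, mul_comm n, pow_mul,
        sq_sqrt (by positivity), mul_pow, mul_pow, mul_assoc, exp_one_pow]
      gcongr
      exact natCast_pow_self_le_exp_mul_factorial n

lemma mul_rpow_half_le {a E B t : ℝ} {n : ℕ} (ha : 1 ≤ a) (ht : 0 < t) (hE : E ≤ a ^ (n + 1))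
    (hB : 0 ≤ B) (hBt : B * t ≤ a * n) :
    E * B ^ ((n : ℝ) / 2) ≤ (a ^ 2 * exp 1) ^ (n + 1) * √((n + 1)! : ℝ) / t ^ ((n : ℝ) / 2) := by
  have hae : 1 ≤ a * exp 1 := one_le_mul_of_one_le_of_one_le ha (one_le_exp zero_le_one)
  have hsqrt : √((a * exp 1) ^ n * n !) ≤ (a * exp 1) ^ (n + 1) * √((n + 1)! : ℝ) := by
    rw [← sqrt_sq (by positivity : 0 ≤ (a * exp 1) ^ (n + 1)), ← sqrt_mul (by positivity),
      ← pow_mul]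
    exact sqrt_le_sqrt (mul_le_mul (pow_le_pow_right₀ hae (by omega))
      (by exact_mod_cast factorial_le n.le_succ) (by positivity) (by positivity))
  calc E * B ^ ((n : ℝ) / 2)
      ≤ a ^ (n + 1) * (√((a * exp 1) ^ n * n !) / t ^ ((n : ℝ) / 2)) :=
        mul_le_mul hE (rpow_half_le_of_mul_le hB ht (by linarith) hBt)
          (rpow_nonneg hB _) (by positivity)
    _ ≤ a ^ (n + 1) * ((a * exp 1) ^ (n + 1) * √((n + 1)! : ℝ) / t ^ ((n : ℝ) / 2)) := by
        gcongr
    _ = (a ^ 2 * exp 1) ^ (n + 1) * √((n + 1)! : ℝ) / t ^ ((n : ℝ) / 2) := by ring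

lemma div_exp_sub_one_nonneg (x : ℝ) : 0 ≤ x / (exp x - 1) := by
  rcases le_total x 0 with hx | hx
  · exact div_nonneg_of_nonpos hx (by linarith [exp_le_one_iff.2 hx])
  · exact div_nonneg hx (by linarith [one_le_exp hx])

lemma div_exp_sub_one_le_exp_abs (x : ℝ) : x / (exp x - 1) ≤ exp |x| := by
  rcases lt_trichotomy x 0 with hx | rfl | hx
  · rw [div_le_iff_of_neg (by linarith [exp_lt_one_iff.2 hx]), abs_of_neg hx, mul_sub,
      ← exp_add, neg_add_cancel, exp_zero, mul_one]
    linarith [add_one_le_exp (-x)]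
  · simp
  · have hden : x ≤ exp x - 1 := by linarith [add_one_le_exp x]
    exact ((div_le_one (by linarith)).2 hden).trans (one_le_exp (abs_nonneg x))

/-- At `n = 0` both sides vanish, since `2ρt/0 = 0` and `exp 0 - 1 = 0`. -/
lemma mul_div_exp_sub_one_eq (ρ D : ℝ) {t : ℝ} (ht : t ≠ 0) (n : ℕ) :
    ρ * D / (exp (2 * ρ * t / n) - 1) =
      D * n / (2 * t) * (2 * ρ * t / n / (exp (2 * ρ * t / n) - 1)) := by
  rcases eq_or_ne n 0 with rfl | hn
  · simp
  · rw [← mul_div_assoc]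
    congr 1
    field_simp

lemma mul_div_exp_sub_one_nonneg (ρ : ℝ) {D t : ℝ} (hD : 0 ≤ D) (ht : 0 < t) (n : ℕ) :
    0 ≤ ρ * D / (exp (2 * ρ * t / n) - 1) := by
  rw [mul_div_exp_sub_one_eq ρ D ht.ne']
  exact mul_nonneg (by positivity) (div_exp_sub_one_nonneg _)

lemma mul_div_exp_sub_one_mul_le (ρ : ℝ) {D t T : ℝ} (hD : 0 ≤ D) (ht : 0 < t) (htT : t ≤ T)
    (n : ℕ) : ρ * D / (exp (2 * ρ * t / n) - 1) * t ≤ D * n / 2 * exp (2 * |ρ| * T) := by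
  have habs : |2 * ρ * t / n| ≤ 2 * |ρ| * T := by
    rcases eq_or_ne n 0 with rfl | hn
    · simp only [CharP.cast_eq_zero, div_zero, abs_zero]
      have := ht.le.trans htT
      positivity
    · rw [abs_div, abs_mul, abs_mul, abs_of_pos ht, Nat.abs_cast, abs_two]
      calc 2 * |ρ| * t / n ≤ 2 * |ρ| * t :=
            div_le_self (by positivity) (by simpa [Nat.one_le_iff_ne_zero])
        _ ≤ 2 * |ρ| * T := by gcongr
  rw [mul_div_exp_sub_one_eq ρ D ht.ne', mul_right_comm, div_mul_eq_mul_div,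
    mul_div_mul_right _ _ ht.ne']
  gcongr
  exact (div_exp_sub_one_le_exp_abs _).trans (exp_le_exp.2 habs)

lemma exp_neg_mul_max_le {ρ t T : ℝ} (ht : 0 < t) (htT : t ≤ T) (n : ℕ) :
    exp (-ρ * t * max 1 (((n : ℝ) + 1) / 2)) ≤ exp (|ρ| * T) ^ (n + 1) := by
  have hmax : max 1 (((n : ℝ) + 1) / 2) ≤ n + 1 :=
    max_le (by simp) (by linarith [n.cast_nonneg (α := ℝ)])
  rw [← exp_nat_mul, exp_le_exp]
  calc -ρ * t * max 1 (((n : ℝ) + 1) / 2) ≤ |ρ| * t * max 1 (((n : ℝ) + 1) / 2) := by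
        have : 0 ≤ max 1 (((n : ℝ) + 1) / 2) := zero_le_one.trans (le_max_left _ _)
        gcongr
        exact neg_le_abs ρ
    _ ≤ |ρ| * T * (n + 1) := by
        have : 0 ≤ T := ht.le.trans htT
        gcongr
    _ = ((n + 1 : ℕ) : ℝ) * (|ρ| * T) := by push_cast; ring

theorem stmt_0_general (T : ℝ) (ρ : ℝ) (d : ℕ) :
    ∃ C : ℝ, 0 < C ∧ ∀ k : ℕ, 1 ≤ k → ∀ t : ℝ, 0 < t → t ≤ T →
      (if ρ = 0 then ((d : ℝ) * ((k : ℝ) - 1) / (2 * t)) ^ (((k : ℝ) - 1) / 2)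
        else Real.exp (-ρ * t * max 1 ((k : ℝ) / 2)) *
          (ρ * (d : ℝ) / (Real.exp (2 * ρ * t / ((k : ℝ) - 1)) - 1)) ^ (((k : ℝ) - 1) / 2))
      ≤ C ^ k * Real.sqrt (Nat.factorial k) / t ^ (((k : ℝ) - 1) / 2) := by
  set a := ((d : ℝ) + 1) * exp (2 * |ρ| * T)
  refine ⟨a ^ 2 * exp 1, by positivity, fun k hk t ht htT => ?_⟩
  obtain ⟨n, rfl⟩ := Nat.exists_eq_add_of_le' hk
  have hT : 0 ≤ T := ht.le.trans htT
  have ha : 1 ≤ a := one_le_mul_of_one_le_of_one_le (by simp) (one_le_exp (by positivity))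
  have hdn : (d : ℝ) * n / 2 * exp (2 * |ρ| * T) ≤ a * n := by
    calc (d : ℝ) * n / 2 * exp (2 * |ρ| * T) = d / 2 * exp (2 * |ρ| * T) * n := by ring
      _ ≤ (d + 1) * exp (2 * |ρ| * T) * n := by gcongr; linarith [d.cast_nonneg (α := ℝ)]
  simp only [Nat.cast_add, Nat.cast_one, add_sub_cancel_right]
  split_ifs with hρ
  · rw [← one_mul (_ ^ _)]
    refine mul_rpow_half_le ha ht (one_le_pow₀ ha) (by positivity) (le_trans ?_ hdn)
    rw [div_mul_eq_mul_div, mul_div_mul_right _ _ ht.ne']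
    exact le_mul_of_one_le_right (by positivity) (one_le_exp (by positivity))
  · refine mul_rpow_half_le ha ht ?_ (mul_div_exp_sub_one_nonneg ρ d.cast_nonneg ht n)
      ((mul_div_exp_sub_one_mul_le ρ d.cast_nonneg ht htT n).trans hdn)
    refine (exp_neg_mul_max_le ht htT n).trans (pow_le_pow_left₀ (exp_pos _).le ?_ _)
    calc exp (|ρ| * T) ≤ exp (2 * |ρ| * T) :=
          exp_le_exp.2 (by nlinarith [mul_nonneg (abs_nonneg ρ) hT])
      _ ≤ a := le_mul_of_one_le_left (exp_pos _).le (by simp)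

/-- For `ρ ∈ ℝ`, `d ≥ 1`, `k ≥ 1` and `t ∈ (0, T]`, the function
`f_k(t) = exp(−ρ t max(1, k/2)) (ρd/(e^{2ρt/(k−1)} − 1))^{(k−1)/2}` if `ρ ≠ 0`,
`f_k(t) = (d(k−1)/(2t))^{(k−1)/2}` if `ρ = 0`, satisfies
`f_k(t) ≤ C^k √(k!) / t^{(k−1)/2}` for a constant `C` depending only on `T, ρ, d`. -/
theorem stmt_0 (T : ℝ) (hT : 0 < T) (ρ : ℝ) (d : ℕ) (hd : 1 ≤ d) :
    ∃ C : ℝ, 0 < C ∧ ∀ k : ℕ, 1 ≤ k → ∀ t : ℝ, 0 < t → t ≤ T →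
      (if ρ = 0 then ((d : ℝ) * ((k : ℝ) - 1) / (2 * t)) ^ (((k : ℝ) - 1) / 2)
        else Real.exp (-ρ * t * max 1 ((k : ℝ) / 2)) *
          (ρ * (d : ℝ) / (Real.exp (2 * ρ * t / ((k : ℝ) - 1)) - 1)) ^ (((k : ℝ) - 1) / 2))
      ≤ C ^ k * Real.sqrt (Nat.factorial k) / t ^ (((k : ℝ) - 1) / 2) :=
  stmt_0_general T ρ d
end

section
/- Let d ≥ 1 be an integer, let τ > 0, and let A ≥ 0. Then for every t ≥ τ, ( Σ_{k=1}^∞ ( d(k−1)/(2t) )^{(k−1)/2} · A^k / k! )² ≤ √(2/π) · (τ/d) · ( e^{d e A² / τ} − 1 ), where for k = 1 the factor ( d(k−1)/(2t) )^{0} is interpreted as 1 and e denotes Euler's number. -/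
/-!
Cauchy–Schwarz with the weights `2^{-(m+1)}`, whose sum is at most `1`, bounds the square of the
series by `Σ 2^{m+1} a_m²`, where `2^{m+1} a_m² = 2 (dm/t)^m A^{2(m+1)} / ((m+1)!)²`. Replacing `t`
by `τ` and using `m^m ≤ e^m m!` (a single term of the series of `e^m`) and `2 ≤ √(2/π) e`, this
term is at most `√(2/π) (τ/d) x^{m+1} / (m+1)!` with `x = d e A² / τ`, and these sum to
`√(2/π) (τ/d) (e^x - 1)`.
-/

open Finset Real Nat

lemma hasSum_pow_succ_div_factorial_succ (x : ℝ) :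
    HasSum (fun m : ℕ => x ^ (m + 1) / (m + 1)!) (exp x - 1) := by
  have := (hasSum_nat_add_iff' 1).mpr (exp_eq_exp_ℝ ▸ NormedSpace.expSeries_div_hasSum_exp x)
  simpa using this

lemma sq_sum_range_le_sum_two_pow_mul_sq (a : ℕ → ℝ) (n : ℕ) :
    (∑ m ∈ range n, a m) ^ 2 ≤ ∑ m ∈ range n, 2 ^ (m + 1) * a m ^ 2 := by
  have hweights : ∑ m ∈ range n, (1 / 2 : ℝ) ^ (m + 1) ≤ 1 := by
    simp only [pow_succ, ← sum_mul]
    linarith [sum_geometric_two_le n]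
  calc (∑ m ∈ range n, a m) ^ 2
      ≤ (∑ m ∈ range n, (1 / 2 : ℝ) ^ (m + 1)) * ∑ m ∈ range n, 2 ^ (m + 1) * a m ^ 2 :=
        sum_sq_le_sum_mul_sum_of_sq_le_mul _ (fun _ _ => by positivity)
          (fun _ _ => by positivity) (fun m _ => by rw [← mul_assoc, ← mul_pow]; norm_num)
    _ ≤ ∑ m ∈ range n, 2 ^ (m + 1) * a m ^ 2 :=
        mul_le_of_le_one_left (sum_nonneg fun _ _ => by positivity) hweights

lemma sq_tsum_le_tsum_two_pow_mul_sq {a : ℕ → ℝ} (ha : ∀ m, 0 ≤ a m)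
    (hs : Summable fun m => 2 ^ (m + 1) * a m ^ 2) :
    (∑' m, a m) ^ 2 ≤ ∑' m, 2 ^ (m + 1) * a m ^ 2 := by
  have hT : 0 ≤ ∑' m, 2 ^ (m + 1) * a m ^ 2 := tsum_nonneg fun _ => by positivity
  rw [← sq_sqrt hT]
  refine pow_le_pow_left₀ (tsum_nonneg ha) (Real.tsum_le_of_sum_range_le ha fun n => ?_) 2
  rw [le_sqrt (sum_nonneg fun m _ => ha m) hT]
  exact (sq_sum_range_le_sum_two_pow_mul_sq a n).trans
    (hs.sum_le_tsum _ fun _ _ => by positivity)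

lemma self_pow_le_exp_one_pow_mul_factorial (n : ℕ) : (n : ℝ) ^ n ≤ exp 1 ^ n * n ! := by
  have h := pow_div_factorial_le_exp _ n.cast_nonneg n
  rwa [div_le_iff₀ (by positivity), ← exp_one_pow] at h

lemma two_le_sqrt_two_div_pi_mul_exp_one : 2 ≤ √(2 / π) * exp 1 := by
  have he : 2.7 < exp 1 := by linarith [exp_one_gt_d9]
  have hsq : 2 / exp 1 ≤ √(2 / π) := by
    rw [le_sqrt (by positivity) (by positivity), div_pow, div_le_div_iff₀ (by positivity) pi_pos]
    nlinarith [pi_lt_d2]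
  calc (2 : ℝ) = 2 / exp 1 * exp 1 := by field_simp
    _ ≤ √(2 / π) * exp 1 := by gcongr

lemma two_mul_self_pow_le (n : ℕ) : 2 * (n : ℝ) ^ n ≤ √(2 / π) * exp 1 ^ (n + 1) * (n + 1)! := by
  calc 2 * (n : ℝ) ^ n ≤ (√(2 / π) * exp 1) * (n + 1) * (exp 1 ^ n * n !) := by
        gcongr
        · nlinarith [two_le_sqrt_two_div_pi_mul_exp_one, (n.cast_nonneg : (0:ℝ) ≤ n)]
        · exact self_pow_le_exp_one_pow_mul_factorial n
    _ = √(2 / π) * exp 1 ^ (n + 1) * (n + 1)! := by push_cast [factorial_succ]; ring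

lemma rpow_div_two_sq {y : ℝ} (hy : 0 ≤ y) (m : ℕ) : (y ^ ((m : ℝ) / 2)) ^ 2 = y ^ m := by
  rw [← rpow_mul_natCast hy, Nat.cast_ofNat, div_mul_cancel₀ _ two_ne_zero, rpow_natCast]

lemma two_pow_mul_sq_term_le {D τ t : ℝ} (hD : 0 < D) (hτ : 0 < τ) (ht : τ ≤ t) (A : ℝ)
    (m : ℕ) :
    2 ^ (m + 1) * ((D * m / (2 * t)) ^ ((m : ℝ) / 2) * A ^ (m + 1) / (m + 1)!) ^ 2
      ≤ √(2 / π) * (τ / D) * ((D * exp 1 * A ^ 2 / τ) ^ (m + 1) / (m + 1)!) := by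
  have ht0 : 0 < t := hτ.trans_le ht
  have hsq : 2 ^ (m + 1) * ((D * m / (2 * t)) ^ ((m : ℝ) / 2) * A ^ (m + 1) / (m + 1)!) ^ 2
      = 2 * (m : ℝ) ^ m * ((D / t) ^ m * (A ^ 2) ^ (m + 1) / ((m + 1)! : ℝ) ^ 2) := by
    rw [div_pow, mul_pow, rpow_div_two_sq (by positivity),
      show D * m / (2 * t) = D / t * m / 2 by ring, div_pow, mul_pow]
    field_simp
    ring
  calc _ = 2 * (m : ℝ) ^ m * ((D / t) ^ m * (A ^ 2) ^ (m + 1) / ((m + 1)! : ℝ) ^ 2) := hsq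
    _ ≤ 2 * (m : ℝ) ^ m * ((D / τ) ^ m * (A ^ 2) ^ (m + 1) / ((m + 1)! : ℝ) ^ 2) := by gcongr
    _ ≤ √(2 / π) * exp 1 ^ (m + 1) * (m + 1)! *
          ((D / τ) ^ m * (A ^ 2) ^ (m + 1) / ((m + 1)! : ℝ) ^ 2) :=
        mul_le_mul_of_nonneg_right (two_mul_self_pow_le m) (by positivity)
    _ = _ := by
      rw [show D * exp 1 * A ^ 2 / τ = D / τ * (exp 1 * A ^ 2) by ring, mul_pow, mul_pow,
        pow_succ (D / τ), factorial_succ]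
      field_simp

/-- For `t ≥ τ > 0` and `A ≥ 0`,
`(Σ_{k=1}^∞ (d(k−1)/(2t))^{(k−1)/2} A^k / k!)² ≤ √(2/π) (τ/d) (e^{deA²/τ} − 1)`.
The series is indexed here by `k = m + 1`, `m : ℕ`. -/
theorem stmt_1 (d : ℕ) (hd : 1 ≤ d) (τ : ℝ) (hτ : 0 < τ) (A : ℝ) (hA : 0 ≤ A) :
    ∀ t : ℝ, τ ≤ t →
      (∑' m : ℕ, ((d : ℝ) * (m : ℝ) / (2 * t)) ^ ((m : ℝ) / 2) * A ^ (m + 1) /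
          (Nat.factorial (m + 1) : ℝ)) ^ 2
        ≤ Real.sqrt (2 / Real.pi) * (τ / d) *
          (Real.exp ((d : ℝ) * Real.exp 1 * A ^ 2 / τ) - 1) := by
  intro t ht
  have ht0 : 0 < t := hτ.trans_le ht
  have hd0 : (0 : ℝ) < d := by exact_mod_cast hd
  have hterm := two_pow_mul_sq_term_le hd0 hτ ht A
  have hexp := (hasSum_pow_succ_div_factorial_succ (d * exp 1 * A ^ 2 / τ)).mul_left
    (√(2 / π) * (τ / d))
  have hnonneg : ∀ m : ℕ, 0 ≤ ((d : ℝ) * m / (2 * t)) ^ ((m : ℝ) / 2) * A ^ (m + 1) / (m + 1)! :=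
    fun m => by positivity
  have hsummable := hexp.summable.of_nonneg_of_le (fun _ => by positivity) hterm
  calc _ ≤ _ := sq_tsum_le_tsum_two_pow_mul_sq hnonneg hsummable
    _ ≤ _ := hsummable.tsum_le_tsum hterm hexp.summable
    _ = _ := hexp.tsum_eq
end

section
/- Let d ≥ 1 be an integer and let f : ℝ^d → ℝ be three times continuously differentiable with bounded third derivatives. Then there exists C > 0, depending only on d and on sup_y ‖∇³f(y)‖, such that for every x ∈ ℝ^d and every r > 0, ‖ ∫_{B(x,r)} (y − x) f(y) dy − V₂ r^{d+2} ∇f(x) ‖ ≤ C r^{d+4}, where the integral is with respect to Lebesgue measure, B(x,r) is the closed Euclidean ball of radius r centered at x, and ‖·‖ is the Euclidean norm on ℝ^d. -/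
/-!
Translating to the origin and pairing `v` with `-v` turns the first moment into
`½ ∫_{B(0,r)} (f (x + v) - f (x - v)) v dv`. Two nested mean value estimates, starting from
the fact that `D²f` is `M₃`-Lipschitz, give `f (x + v) - f (x - v) = 2 Df(x) v + O(M₃ ‖v‖³)`.
The reflections and coordinate permutations of the ball give
`∫_{B(0,r)} ⟪a, v⟫ v dv = V₂ r^{d+2} a`, so the linear term produces exactly `V₂ r^{d+2} ∇f(x)`
and the error is `O(M₃ r³ · r · vol B(0,r))`.
-/

open MeasureTheory Metric Set Module
open scoped RealInnerProductSpace

section Taylor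

variable {E F : Type*} [NormedAddCommGroup E] [NormedSpace ℝ E] [NormedAddCommGroup F]
  [NormedSpace ℝ F]

theorem norm_sub_le_of_hasFDerivAt_of_norm_le_mul_pow {g : E → F} {g' : E → E →L[ℝ] F}
    {C : ℝ} {n : ℕ} (hg : ∀ u, HasFDerivAt g (g' u) u) (hC : ∀ u, ‖g' u‖ ≤ C * ‖u‖ ^ n)
    (v : E) : ‖g v - g 0‖ ≤ C * ‖v‖ ^ (n + 1) := by
  rcases eq_or_ne v 0 with rfl | hv
  · simp
  have hC0 : 0 ≤ C :=
    nonneg_of_mul_nonneg_left ((norm_nonneg _).trans (hC v)) (by positivity)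
  have hball : ∀ u ∈ closedBall (0 : E) ‖v‖, ‖fderiv ℝ g u‖ ≤ C * ‖v‖ ^ n := fun u hu => by
    rw [(hg u).fderiv]
    exact (hC u).trans (by gcongr; exact mem_closedBall_zero_iff.1 hu)
  calc ‖g v - g 0‖ ≤ C * ‖v‖ ^ n * ‖v - 0‖ :=
        (convex_closedBall (0 : E) ‖v‖).norm_image_sub_le_of_norm_fderiv_le
          (fun u _ => (hg u).differentiableAt) hball
          (mem_closedBall_self (norm_nonneg v)) (mem_closedBall_zero_iff.2 le_rfl)
    _ = C * ‖v‖ ^ (n + 1) := by rw [sub_zero, pow_succ, mul_assoc]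

theorem norm_fderiv_fderiv_sub_le {f : E → F} (hf : ContDiff ℝ 3 f) {M : ℝ}
    (hM : ∀ y, ‖iteratedFDeriv ℝ 3 f y‖ ≤ M) (a b : E) :
    ‖fderiv ℝ (fderiv ℝ f) a - fderiv ℝ (fderiv ℝ f) b‖ ≤ M * ‖a - b‖ := by
  have hdiff : Differentiable ℝ (fderiv ℝ (fderiv ℝ f)) :=
    ((hf.fderiv_right (m := 2) le_rfl).fderiv_right (m := 1) le_rfl).differentiable one_ne_zero
  refine convex_univ.norm_image_sub_le_of_norm_fderiv_le (𝕜 := ℝ) (f := fderiv ℝ (fderiv ℝ f))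
    (fun y _ => hdiff y) (fun y _ => ?_) (mem_univ _) (mem_univ _)
  rw [← norm_iteratedFDeriv_one, norm_iteratedFDeriv_fderiv, norm_iteratedFDeriv_fderiv]
  exact hM y

theorem HasFDerivAt.comp_const_sub {φ : E → F} {φ' : E →L[ℝ] F} {x u : E}
    (hφ : HasFDerivAt φ φ' (x - u)) : HasFDerivAt (fun u => φ (x - u)) (-φ') u := by
  simpa [Function.comp_def] using hφ.comp u ((hasFDerivAt_id u).const_sub x)

theorem HasFDerivAt.comp_const_add {φ : E → F} {φ' : E →L[ℝ] F} {x u : E}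
    (hφ : HasFDerivAt φ φ' (x + u)) : HasFDerivAt (fun u => φ (x + u)) φ' u :=
  (hasFDerivAt_comp_add_left x).2 hφ

theorem norm_sub_sub_two_smul_fderiv_le {f : E → F} (hf : ContDiff ℝ 3 f) {M : ℝ}
    (hM : ∀ y, ‖iteratedFDeriv ℝ 3 f y‖ ≤ M) (x v : E) :
    ‖f (x + v) - f (x - v) - (2 : ℝ) • fderiv ℝ f x v‖ ≤ 2 * M * ‖v‖ ^ 3 := by
  have hf' : ∀ y, HasFDerivAt f (fderiv ℝ f y) y := fun y =>
    (hf.differentiable (by norm_num) y).hasFDerivAt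
  have hf'' : ∀ y, HasFDerivAt (fderiv ℝ f) (fderiv ℝ (fderiv ℝ f) y) y := fun y =>
    ((hf.fderiv_right (m := 2) le_rfl).differentiable (by norm_num) y).hasFDerivAt
  set k : E → E →L[ℝ] F :=
    fun u => fderiv ℝ f (x + u) + fderiv ℝ f (x - u) - (2 : ℝ) • fderiv ℝ f x
  have hk : ∀ u, HasFDerivAt k
      (fderiv ℝ (fderiv ℝ f) (x + u) - fderiv ℝ (fderiv ℝ f) (x - u)) u := fun u =>
    (((hf'' (x + u)).comp_const_add.add (hf'' (x - u)).comp_const_sub).sub_const _).congr_fderiv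
      (sub_eq_add_neg _ _).symm
  have hk_le : ∀ u, ‖k u‖ ≤ 2 * M * ‖u‖ ^ 2 := fun u => by
    have hk0 : k 0 = 0 := by simp only [k, add_zero, sub_zero]; module
    simpa [hk0] using norm_sub_le_of_hasFDerivAt_of_norm_le_mul_pow hk (n := 1) (fun u => by
      refine (norm_fderiv_fderiv_sub_le hf hM (x + u) (x - u)).trans_eq ?_
      rw [show x + u - (x - u) = (2 : ℝ) • u by module, norm_smul, Real.norm_two]
      ring) u
  have hh : ∀ u,
      HasFDerivAt (fun u => f (x + u) - f (x - u) - (2 : ℝ) • fderiv ℝ f x u) (k u) u := fun u =>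
      (((hf' (x + u)).comp_const_add.sub (hf' (x - u)).comp_const_sub).sub
          ((2 : ℝ) • fderiv ℝ f x).hasFDerivAt).congr_fderiv (by rw [sub_neg_eq_add])
  simpa using norm_sub_le_of_hasFDerivAt_of_norm_le_mul_pow hh hk_le v

end Taylor

section Ball

variable {E F : Type*} [NormedAddCommGroup E] [InnerProductSpace ℝ E] [FiniteDimensional ℝ E]
  [MeasurableSpace E] [BorelSpace E] [NormedAddCommGroup F] [NormedSpace ℝ F]

theorem setIntegral_closedBall_eq_setIntegral_closedBall_zero (g : E → F) (x : E) (r : ℝ) :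
    ∫ y in closedBall x r, g y = ∫ v in closedBall (0 : E) r, g (x + v) := by
  have hpre : (x + ·) ⁻¹' closedBall x r = closedBall (0 : E) r := by
    ext v
    simp [dist_eq_norm]
  rw [← hpre, (measurePreserving_add_left volume x).setIntegral_preimage_emb
    (Homeomorph.addLeft x).measurableEmbedding]

theorem setIntegral_closedBall_zero_comp_linearIsometryEquiv (e : E ≃ₗᵢ[ℝ] E) (g : E → F)
    (r : ℝ) : ∫ v in closedBall (0 : E) r, g (e v) = ∫ v in closedBall (0 : E) r, g v := by
  have hpre : e ⁻¹' closedBall (0 : E) r = closedBall (0 : E) r := by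
    ext v
    simp
  simpa [hpre] using
    e.measurePreserving.setIntegral_preimage_emb e.toHomeomorph.measurableEmbedding g
      (closedBall 0 r)

theorem setIntegral_closedBall_zero_eq_pow_smul (g : E → F) {r : ℝ} (hr : 0 < r) :
    ∫ v in closedBall (0 : E) r, g v =
      r ^ finrank ℝ E • ∫ z in closedBall (0 : E) 1, g (r • z) := by
  rw [Measure.setIntegral_comp_smul_of_pos _ _ _ hr, smul_inv_smul₀ (pow_ne_zero _ hr.ne'),
    _root_.smul_closedBall _ _ zero_le_one, smul_zero, Real.norm_of_nonneg hr.le, mul_one]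

theorem setIntegral_closedBall_smul_sub_eq {f : E → ℝ} (hf : Continuous f) (x : E) (r : ℝ) :
    ∫ y in closedBall x r, f y • (y - x) =
      (2⁻¹ : ℝ) • ∫ v in closedBall (0 : E) r, (f (x + v) - f (x - v)) • v := by
  have hint : ∀ g : E → E, Continuous g →
      IntegrableOn (fun v => f (g v) • v) (closedBall (0 : E) r) := fun g hg =>
    (by fun_prop : Continuous fun v => f (g v) • v).continuousOn.integrableOn_compact
      (isCompact_closedBall _ _)
  have hodd : ∫ v in closedBall (0 : E) r, f (x - v) • v =
      -∫ v in closedBall (0 : E) r, f (x + v) • v := by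
    rw [← setIntegral_closedBall_zero_comp_linearIsometryEquiv (LinearIsometryEquiv.neg ℝ),
      ← integral_neg]
    simp [sub_eq_add_neg]
  rw [setIntegral_closedBall_eq_setIntegral_closedBall_zero]
  simp_rw [add_sub_cancel_left, sub_smul]
  rw [integral_sub (hint _ (by fun_prop)) (hint _ (by fun_prop)), hodd]
  module

end Ball

section EuclideanMoments

variable {ι : Type*} [Fintype ι]

theorem integral_closedBall_mul_eq_zero_of_ne {i j : ι} (hij : i ≠ j) (R : ℝ) :
    ∫ z in closedBall (0 : EuclideanSpace ℝ ι) R, z i * z j = 0 := by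
  classical
  let e : EuclideanSpace ℝ ι ≃ₗᵢ[ℝ] EuclideanSpace ℝ ι :=
    .piLpCongrRight 2 fun k => if k = i then .neg ℝ else .refl ℝ ℝ
  have he : ∀ z, e z i * e z j = -(z i * z j) := fun z => by simp [e, hij.symm]
  have := setIntegral_closedBall_zero_comp_linearIsometryEquiv e (fun z => z i * z j) R
  simp only [he, integral_neg] at this
  linarith

theorem integral_closedBall_sq_eq (i j : ι) (R : ℝ) :
    ∫ z in closedBall (0 : EuclideanSpace ℝ ι) R, z i ^ 2 =
      ∫ z in closedBall (0 : EuclideanSpace ℝ ι) R, z j ^ 2 := by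
  classical
  simpa using setIntegral_closedBall_zero_comp_linearIsometryEquiv
    (LinearIsometryEquiv.piLpCongrLeft 2 ℝ ℝ (Equiv.swap i j)) (fun z => z j ^ 2) R

theorem integral_closedBall_sq_eq_pow_mul (i : ι) {r : ℝ} (hr : 0 < r) :
    ∫ z in closedBall (0 : EuclideanSpace ℝ ι) r, z i ^ 2 =
      r ^ (Fintype.card ι + 2) * ∫ z in closedBall (0 : EuclideanSpace ℝ ι) 1, z i ^ 2 := by
  rw [setIntegral_closedBall_zero_eq_pow_smul _ hr, finrank_euclideanSpace, smul_eq_mul]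
  simp_rw [PiLp.smul_apply, smul_eq_mul, mul_pow, integral_const_mul]
  ring

theorem integral_closedBall_inner_smul (a : EuclideanSpace ℝ ι) (i₀ : ι) (R : ℝ) :
    ∫ z in closedBall (0 : EuclideanSpace ℝ ι) R, ⟪a, z⟫ • z =
      (∫ z in closedBall (0 : EuclideanSpace ℝ ι) R, z i₀ ^ 2) • a := by
  have hint : ∀ g : EuclideanSpace ℝ ι → ℝ, Continuous g →
      IntegrableOn g (closedBall (0 : EuclideanSpace ℝ ι) R) := fun g hg =>
    hg.continuousOn.integrableOn_compact (isCompact_closedBall _ _)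
  ext j
  have hcoord : ∀ z : EuclideanSpace ℝ ι, (⟪a, z⟫ • z) j = ∑ i, a i * (z i * z j) := fun z => by
    simp only [PiLp.smul_apply, smul_eq_mul, PiLp.inner_apply, RCLike.inner_apply, conj_trivial,
      Finset.sum_mul]
    exact Finset.sum_congr rfl fun i _ => by ring
  rw [eval_integral_piLp (fun i => hint _ (by fun_prop))]
  simp_rw [hcoord]
  rw [integral_finsetSum _ (fun i _ => hint _ (by fun_prop))]
  simp_rw [integral_const_mul]
  rw [Finset.sum_eq_single j
    (fun i _ hij => by rw [integral_closedBall_mul_eq_zero_of_ne hij, mul_zero]) (by simp)]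
  simp [← sq, integral_closedBall_sq_eq j i₀, mul_comm]

end EuclideanMoments

theorem norm_setIntegral_smul_sub_sub_smul_gradient_le {ι : Type*} [Fintype ι]
    {f : EuclideanSpace ℝ ι → ℝ} (hf : ContDiff ℝ 3 f) {M : ℝ}
    (hM : ∀ y, ‖iteratedFDeriv ℝ 3 f y‖ ≤ M) (i₀ : ι) (x : EuclideanSpace ℝ ι) {r : ℝ}
    (hr : 0 < r) :
    ‖(∫ y in closedBall x r, f y • (y - x)) -
        ((∫ z in closedBall (0 : EuclideanSpace ℝ ι) 1, z i₀ ^ 2) * r ^ (Fintype.card ι + 2)) •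
          gradient f x‖
      ≤ M * volume.real (closedBall (0 : EuclideanSpace ℝ ι) 1) * r ^ (Fintype.card ι + 4) := by
  set B := closedBall (0 : EuclideanSpace ℝ ι) r
  have hint : ∀ g : EuclideanSpace ℝ ι → EuclideanSpace ℝ ι, Continuous g → IntegrableOn g B :=
    fun g hg => hg.continuousOn.integrableOn_compact (isCompact_closedBall _ _)
  have hgrad : ∀ v, fderiv ℝ f x v = ⟪gradient f x, v⟫ := fun v => by
    rw [← toDual_gradient, InnerProductSpace.toDual_apply_apply]
  have hsplit : (∫ y in closedBall x r, f y • (y - x)) -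
      ((∫ z in closedBall (0 : EuclideanSpace ℝ ι) 1, z i₀ ^ 2) * r ^ (Fintype.card ι + 2)) •
        gradient f x =
      (2⁻¹ : ℝ) • ∫ v in B, (f (x + v) - f (x - v) - (2 : ℝ) • fderiv ℝ f x v) • v := by
    rw [setIntegral_closedBall_smul_sub_eq hf.continuous, mul_comm,
      ← integral_closedBall_sq_eq_pow_mul i₀ hr, ← integral_closedBall_inner_smul]
    simp_rw [sub_smul _ (_ • _), hgrad, smul_eq_mul, mul_smul]
    rw [integral_sub (hint _ (by fun_prop)) (hint _ (by fun_prop)), integral_smul]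
    module
  have hbound : ∀ v ∈ B,
      ‖(f (x + v) - f (x - v) - (2 : ℝ) • fderiv ℝ f x v) • v‖ ≤ 2 * M * r ^ 3 * r := by
    intro v hv
    have hvr : ‖v‖ ≤ r := mem_closedBall_zero_iff.1 hv
    have hM0 : 0 ≤ M := (norm_nonneg _).trans (hM x)
    rw [norm_smul]
    gcongr
    exact (norm_sub_sub_two_smul_fderiv_le hf hM x v).trans (by gcongr)
  calc _ = 2⁻¹ * ‖∫ v in B, (f (x + v) - f (x - v) - (2 : ℝ) • fderiv ℝ f x v) • v‖ := by
        rw [hsplit, norm_smul]; norm_num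
    _ ≤ 2⁻¹ * (2 * M * r ^ 3 * r * volume.real B) := by
        gcongr
        exact norm_setIntegral_le_of_norm_le_const measure_closedBall_lt_top hbound
    _ = _ := by
        rw [Measure.addHaar_real_closedBall' _ _ hr.le, finrank_euclideanSpace]
        ring

/-- First-moment ball estimate: for `f` of class `C³` with third derivatives bounded by `M₃`,
`‖∫_{B(x,r)} (y−x) f(y) dy − V₂ r^{d+2} ∇f(x)‖ ≤ C r^{d+4}` for a constant `C > 0` depending
only on `d` and `M₃`, where `V₂ = ∫_{B(0,1)} z₁² dz`. -/
theorem stmt_8 (d : ℕ) (hd : 1 ≤ d) (M₃ : ℝ) :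
    ∃ C : ℝ, 0 < C ∧
      ∀ f : EuclideanSpace ℝ (Fin d) → ℝ, ContDiff ℝ 3 f →
        (∀ y, ‖iteratedFDeriv ℝ 3 f y‖ ≤ M₃) →
      ∀ (x : EuclideanSpace ℝ (Fin d)) (r : ℝ), 0 < r →
        ‖(∫ y in Metric.closedBall x r, f y • (y - x)) -
            ((∫ z in Metric.closedBall (0 : EuclideanSpace ℝ (Fin d)) 1, (z ⟨0, hd⟩) ^ 2) *
              r ^ (d + 2)) • gradient f x‖
          ≤ C * r ^ (d + 4) := by
  set V := volume.real (closedBall (0 : EuclideanSpace ℝ (Fin d)) 1)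
  refine ⟨max M₃ 0 * V + 1, by positivity, fun f hf hM x r hr => ?_⟩
  have hC : M₃ * V ≤ max M₃ 0 * V + 1 := by
    linarith [mul_le_mul_of_nonneg_right (le_max_left M₃ 0) (measureReal_nonneg : 0 ≤ V)]
  simpa only [Fintype.card_fin] using
    (norm_setIntegral_smul_sub_sub_smul_gradient_le hf hM ⟨0, hd⟩ x hr).trans
      (mul_le_mul_of_nonneg_right hC (by positivity))
end

section
/- Let d ≥ 1 be an integer and let f : ℝ^d → ℝ be twice continuously differentiable with bounded second derivatives. Then there exists C > 0, depending only on d and on sup_y ‖∇²f(y)‖, such that for every x ∈ ℝ^d and every r > 0, ‖ ∫_{B(x,r)} (y − x)(y − x)^T f(y) dy − V₂ r^{d+2} f(x) I_d ‖ ≤ C r^{d+4}, where the integral is entrywise with respect to Lebesgue measure, I_d is the d×d identity matrix, and ‖·‖ is the Frobenius (Hilbert–Schmidt) matrix norm. -/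
/-! Translating to the ball centred at `0`, write `f (x + z) = f x + Df(x) z + ρ z`, where
`|ρ z| ≤ M ‖z‖²` by the mean value inequality for the `M`-Lipschitz map `Df`. Against `z_i z_j`
the constant term produces `f x` times the second moments of the ball, which vanish off the
diagonal (reflect one coordinate), coincide on it (swap two coordinates) and scale like
`r^(d+2)`; the linear term is odd and integrates to `0`; and the remainder contributes at most
`M r⁴ vol B(0,r) = M vol B(0,1) r^(d+4)`. The Frobenius norm of a `d × d` matrix is at most `d`
times its largest entry. -/

open MeasureTheory Metric Module

section BallIntegrals

variable {E F : Type*} [NormedAddCommGroup E] [NormedAddCommGroup F] [NormedSpace ℝ F]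

theorem setIntegral_closedBall_zero_add_left [MeasurableSpace E] [BorelSpace E] (μ : Measure E)
    [μ.IsAddLeftInvariant] (G : E → F) (x : E) (r : ℝ) :
    ∫ z in closedBall 0 r, G (x + z) ∂μ = ∫ y in closedBall x r, G y ∂μ := by
  have hpre : (x + ·) ⁻¹' closedBall x r = closedBall 0 r := by
    ext z
    simp [dist_eq_norm]
  simpa [hpre] using (measurePreserving_add_left μ x).setIntegral_preimage_emb
    (Homeomorph.addLeft x).measurableEmbedding G (closedBall x r)

theorem setIntegral_closedBall_comp_smul [NormedSpace ℝ E] [FiniteDimensional ℝ E]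
    [MeasurableSpace E] [BorelSpace E] (μ : Measure E) [μ.IsAddHaarMeasure] {g : E → ℝ} {k : ℕ}
    (hg : ∀ (c : ℝ) z, g (c • z) = c ^ k * g z) {r : ℝ} (hr : 0 < r) :
    ∫ z in closedBall 0 r, g z ∂μ = r ^ (finrank ℝ E + k) * ∫ z in closedBall 0 1, g z ∂μ := by
  have h := Measure.setIntegral_comp_smul_of_pos μ g (closedBall 0 1) hr
  rw [_root_.smul_closedBall _ _ zero_le_one, smul_zero, Real.norm_of_nonneg hr.le, mul_one] at h
  simp only [hg, integral_const_mul, smul_eq_mul] at h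
  rw [eq_inv_mul_iff_mul_eq₀ (by positivity)] at h
  rw [← h, pow_add, mul_assoc]

variable [InnerProductSpace ℝ E] [FiniteDimensional ℝ E] [MeasurableSpace E] [BorelSpace E]

theorem setIntegral_closedBall_comp_linearIsometryEquiv (e : E ≃ₗᵢ[ℝ] E) (g : E → F) (r : ℝ) :
    ∫ z in closedBall 0 r, g (e z) = ∫ z in closedBall 0 r, g z := by
  have hpre : e ⁻¹' closedBall 0 r = closedBall 0 r := by
    ext z
    simp
  simpa [hpre] using e.measurePreserving.setIntegral_preimage_emb
    e.toHomeomorph.measurableEmbedding g (closedBall 0 r)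

theorem setIntegral_closedBall_eq_zero_of_odd {g : E → ℝ} (hg : ∀ z, g (-z) = -g z) (r : ℝ) :
    ∫ z in closedBall 0 r, g z = 0 := by
  have h := setIntegral_closedBall_comp_linearIsometryEquiv (LinearIsometryEquiv.neg ℝ) g r
  simp only [LinearIsometryEquiv.coe_neg, hg, integral_neg] at h
  linarith

end BallIntegrals

section Taylor

variable {E F : Type*} [NormedAddCommGroup E] [NormedSpace ℝ E] [NormedAddCommGroup F]
  [NormedSpace ℝ F] {f : E → F} {M : ℝ}

theorem norm_sub_sub_fderiv_le_of_norm_iteratedFDeriv_two_le (hf : ContDiff ℝ 2 f)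
    (hM : ∀ y, ‖iteratedFDeriv ℝ 2 f y‖ ≤ M) (x y : E) :
    ‖f y - f x - fderiv ℝ f x (y - x)‖ ≤ M * ‖y - x‖ ^ 2 := by
  have hM0 : 0 ≤ M := (norm_nonneg _).trans (hM x)
  have hdiff : Differentiable ℝ f := hf.differentiable (by norm_num)
  have hdiff' : Differentiable ℝ (fderiv ℝ f) :=
    (hf.fderiv_right (m := 1) (by norm_num)).differentiable (by norm_num)
  have hlip : ∀ z, ‖fderiv ℝ f z - fderiv ℝ f x‖ ≤ M * ‖z - x‖ := fun z =>
    convex_univ.norm_image_sub_le_of_norm_fderiv_le (fun w _ => hdiff' w)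
      (fun w _ => by rw [← norm_iteratedFDeriv_one, norm_iteratedFDeriv_fderiv]; exact hM w)
      trivial trivial
  have hball : ∀ z ∈ closedBall x ‖y - x‖, ‖fderiv ℝ f z - fderiv ℝ f x‖ ≤ M * ‖y - x‖ :=
    fun z hz => (hlip z).trans (by gcongr; rwa [← dist_eq_norm])
  calc ‖f y - f x - fderiv ℝ f x (y - x)‖ ≤ M * ‖y - x‖ * ‖y - x‖ :=
        (convex_closedBall x _).norm_image_sub_le_of_norm_fderiv_le' (fun z _ => hdiff z) hball
          (mem_closedBall_self (norm_nonneg _)) (by simp [dist_eq_norm])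
    _ = M * ‖y - x‖ ^ 2 := by ring

end Taylor

namespace EuclideanSpace

variable {ι : Type*} [Fintype ι]

theorem setIntegral_closedBall_mul_apply_of_ne {i j : ι} (hij : i ≠ j) (r : ℝ) :
    ∫ z in closedBall (0 : EuclideanSpace ℝ ι) r, z i * z j = 0 := by
  classical
  let e : EuclideanSpace ℝ ι ≃ₗᵢ[ℝ] EuclideanSpace ℝ ι := LinearIsometryEquiv.piLpCongrRight 2
    fun k => if k = i then LinearIsometryEquiv.neg ℝ else LinearIsometryEquiv.refl ℝ ℝ
  have h := setIntegral_closedBall_comp_linearIsometryEquiv e (fun z => z i * z j) r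
  simp only [e, LinearIsometryEquiv.piLpCongrRight_apply, LinearIsometryEquiv.coe_neg,
    LinearIsometryEquiv.coe_refl, hij.symm, ↓reduceIte, id_eq, neg_mul, integral_neg] at h
  linarith

theorem setIntegral_closedBall_sq_apply_eq (i k : ι) (r : ℝ) :
    ∫ z in closedBall (0 : EuclideanSpace ℝ ι) r, z i ^ 2 =
      ∫ z in closedBall (0 : EuclideanSpace ℝ ι) r, z k ^ 2 := by
  classical
  have h := setIntegral_closedBall_comp_linearIsometryEquiv
    (LinearIsometryEquiv.piLpCongrLeft 2 ℝ ℝ (Equiv.swap i k)) (fun z => z i ^ 2) r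
  simpa [LinearIsometryEquiv.piLpCongrLeft_apply, Equiv.piCongrLeft'_apply] using h.symm

theorem setIntegral_closedBall_mul_apply [DecidableEq ι] (i j k : ι) {r : ℝ} (hr : 0 < r) :
    ∫ z in closedBall (0 : EuclideanSpace ℝ ι) r, z i * z j =
      if i = j then (∫ z in closedBall (0 : EuclideanSpace ℝ ι) 1, z k ^ 2) *
        r ^ (Fintype.card ι + 2) else 0 := by
  split_ifs with hij
  · subst hij
    have hhom : ∀ (c : ℝ) (z : EuclideanSpace ℝ ι), (c • z) i ^ 2 = c ^ 2 * z i ^ 2 := by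
      intro c z
      simp only [PiLp.smul_apply, smul_eq_mul]
      ring
    rw [← finrank_euclideanSpace (𝕜 := ℝ), ← setIntegral_closedBall_sq_apply_eq i, mul_comm,
      ← setIntegral_closedBall_comp_smul volume hhom hr]
    simp only [sq]
  · exact setIntegral_closedBall_mul_apply_of_ne hij r

theorem abs_setIntegral_closedBall_mul_apply_mul_le {g : EuclideanSpace ℝ ι → ℝ} {M r : ℝ}
    (hM : 0 ≤ M) (hg : ∀ z, |g z| ≤ M * ‖z‖ ^ 2) (hr : 0 ≤ r) (i j : ι) :
    |∫ z in closedBall (0 : EuclideanSpace ℝ ι) r, z i * z j * g z| ≤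
      M * volume.real (closedBall (0 : EuclideanSpace ℝ ι) 1) * r ^ (Fintype.card ι + 4) := by
  have hbound : ∀ z ∈ closedBall (0 : EuclideanSpace ℝ ι) r,
      ‖z i * z j * g z‖ ≤ r * r * (M * r ^ 2) := by
    intro z hz
    have hz : ‖z‖ ≤ r := mem_closedBall_zero_iff.mp hz
    rw [norm_mul, norm_mul]
    gcongr
    · exact (PiLp.norm_apply_le z i).trans hz
    · exact (PiLp.norm_apply_le z j).trans hz
    · exact (hg z).trans (by gcongr)
  calc |∫ z in closedBall (0 : EuclideanSpace ℝ ι) r, z i * z j * g z|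
      ≤ r * r * (M * r ^ 2) * volume.real (closedBall (0 : EuclideanSpace ℝ ι) r) :=
        norm_setIntegral_le_of_norm_le_const measure_closedBall_lt_top hbound
    _ = M * volume.real (closedBall (0 : EuclideanSpace ℝ ι) 1) * r ^ (Fintype.card ι + 4) := by
        rw [Measure.addHaar_real_closedBall' _ _ hr, finrank_euclideanSpace]
        ring

theorem abs_setIntegral_closedBall_mul_apply_sub_le [DecidableEq ι] {f : EuclideanSpace ℝ ι → ℝ}
    {M : ℝ} (hf : ContDiff ℝ 2 f) (hM : ∀ y, ‖iteratedFDeriv ℝ 2 f y‖ ≤ M)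
    (x : EuclideanSpace ℝ ι) {r : ℝ} (hr : 0 < r) (i j k : ι) :
    |(∫ y in closedBall x r, (y - x) i * (y - x) j * f y) -
        (if i = j then (∫ z in closedBall (0 : EuclideanSpace ℝ ι) 1, z k ^ 2) *
          r ^ (Fintype.card ι + 2) * f x else 0)| ≤
      M * volume.real (closedBall (0 : EuclideanSpace ℝ ι) 1) * r ^ (Fintype.card ι + 4) := by
  set L := fderiv ℝ f x
  set ρ : EuclideanSpace ℝ ι → ℝ := fun z => f (x + z) - f x - L z
  have hρ : ∀ z, |ρ z| ≤ M * ‖z‖ ^ 2 := fun z => by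
    simpa using norm_sub_sub_fderiv_le_of_norm_iteratedFDeriv_two_le hf hM x (x + z)
  have hintegrable : ∀ g : EuclideanSpace ℝ ι → ℝ, Continuous g →
      IntegrableOn g (closedBall 0 r) := fun g hg =>
    hg.continuousOn.integrableOn_compact (isCompact_closedBall _ _)
  have hexpand : ∀ z : EuclideanSpace ℝ ι,
      z i * z j * f (x + z) = f x * (z i * z j) + z i * z j * L z + z i * z j * ρ z := fun z => by
    simp only [ρ]
    ring
  rw [← setIntegral_closedBall_zero_add_left volume]
  simp only [add_sub_cancel_left, hexpand]
  have hodd : ∫ z in closedBall (0 : EuclideanSpace ℝ ι) r, z i * z j * L z = 0 :=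
    setIntegral_closedBall_eq_zero_of_odd (fun z => by simp only [PiLp.neg_apply, map_neg]; ring) r
  rw [integral_add (hintegrable _ ?_) (hintegrable _ ?_),
    integral_add (hintegrable _ ?_) (hintegrable _ ?_), integral_const_mul, hodd,
    setIntegral_closedBall_mul_apply i j k hr]
  · have hrem := abs_setIntegral_closedBall_mul_apply_mul_le ((norm_nonneg _).trans (hM x)) hρ
      hr.le i j
    split_ifs <;> simpa [mul_comm, mul_left_comm] using hrem
  all_goals have := hf.continuous; fun_prop

end EuclideanSpace

theorem sqrt_sum_sum_sq_le_card_mul {ι : Type*} [Fintype ι] {a : ι → ι → ℝ} {B : ℝ}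
    (h : ∀ i j, |a i j| ≤ B) : √(∑ i, ∑ j, a i j ^ 2) ≤ Fintype.card ι * B := by
  rcases isEmpty_or_nonempty ι with hι | ⟨⟨i₀⟩⟩
  · simp
  have hB : 0 ≤ B := (abs_nonneg _).trans (h i₀ i₀)
  rw [Real.sqrt_le_iff]
  refine ⟨by positivity, ?_⟩
  calc ∑ i, ∑ j, a i j ^ 2 ≤ ∑ i : ι, ∑ j : ι, B ^ 2 := by
        refine Finset.sum_le_sum fun i _ => Finset.sum_le_sum fun j _ => ?_
        exact (abs_le.mp (h i j)).elim sq_le_sq'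
    _ = (Fintype.card ι * B) ^ 2 := by
        simp only [Finset.sum_const, Finset.card_univ, nsmul_eq_mul]
        ring

/-- Second-moment ball estimate: for `f` of class `C²` with second derivatives bounded by `M₂`,
the matrix `∫_{B(x,r)} (y−x)(y−x)^T f(y) dy` is within `C r^{d+4}` (Frobenius norm) of
`V₂ r^{d+2} f(x) I_d`, with `C > 0` depending only on `d` and `M₂`,
where `V₂ = ∫_{B(0,1)} z₁² dz`. -/
theorem stmt_9 (d : ℕ) (hd : 1 ≤ d) (M₂ : ℝ) :
    ∃ C : ℝ, 0 < C ∧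
      ∀ f : EuclideanSpace ℝ (Fin d) → ℝ, ContDiff ℝ 2 f →
        (∀ y, ‖iteratedFDeriv ℝ 2 f y‖ ≤ M₂) →
      ∀ (x : EuclideanSpace ℝ (Fin d)) (r : ℝ), 0 < r →
        Real.sqrt (∑ i : Fin d, ∑ j : Fin d,
            ((∫ y in Metric.closedBall x r, (y - x) i * (y - x) j * f y) -
              (if i = j then
                (∫ z in Metric.closedBall (0 : EuclideanSpace ℝ (Fin d)) 1, (z ⟨0, hd⟩) ^ 2) *
                  r ^ (d + 2) * f x
              else 0)) ^ 2)
          ≤ C * r ^ (d + 4) := by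
  set K := volume.real (closedBall (0 : EuclideanSpace ℝ (Fin d)) 1)
  refine ⟨d * |M₂| * K + 1, by positivity, fun f hf hM x r hr => ?_⟩
  have hentry :=
    EuclideanSpace.abs_setIntegral_closedBall_mul_apply_sub_le hf hM x hr (k := ⟨0, hd⟩)
  simp only [Fintype.card_fin] at hentry
  calc _ ≤ d * (M₂ * K * r ^ (d + 4)) := by simpa using sqrt_sum_sum_sq_le_card_mul hentry
    _ ≤ (d * |M₂| * K + 1) * r ^ (d + 4) := by
        have hr' : 0 < r ^ (d + 4) := by positivity
        nlinarith [mul_le_mul_of_nonneg_right (le_abs_self M₂)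
          (by positivity : (0 : ℝ) ≤ d * K * r ^ (d + 4))]
end
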